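/- Let M, a ∈ ℝ and m ∈ ℤ. Define the operator D on functions g : ℝ → ℂ by (Dg)(r) = g′(r) + (2·i·a·m/Δ(r))·g(r) wherever Δ(r) ≠ 0 (this is e^{−imφ₊}·∂_{r_out}(e^{imφ₊}·g) in outgoing Eddington–Finkelstein variables). Then for every r with Δ(r) ≠ 0, applying D four times to the function g₀(r) = Δ(r)² yields Δ(r)²·(D(D(D(D g₀))))(r) = 24·A_m(r). -/

import Mathlib

noncomputable section

/-- `Δ(r) = r² − 2Mr + a²`. -/
def Δk (M a r : ℝ) : ℝ := r^2 - 2*M*r + a^2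

/-- The polynomial `A_m(r)` governing the leading-order asymptotics of the spin `+2`
Teukolsky field. -/
def Am (M a : ℝ) (m : ℤ) (r : ℝ) : ℂ :=
  (1/3 : ℂ) * (3 * ((Δk M a r : ℝ) : ℂ)^2
    + Complex.I * (a : ℂ) * (m : ℂ) * ((r : ℂ) - (M : ℂ)) *
        (4 * ((a : ℂ)^2 - (M : ℂ)^2) + 6 * ((Δk M a r : ℝ) : ℂ))
    - (a : ℂ)^2 * (m : ℂ)^2 *
        (2 * ((Δk M a r : ℝ) : ℂ) + 6 * ((a : ℂ)^2 - (M : ℂ)^2)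
          + 4 * ((r : ℂ) - (M : ℂ))^2)
    - 4 * Complex.I * (a : ℂ)^3 * (m : ℂ)^3 * ((r : ℂ) - (M : ℂ))
    + 2 * (a : ℂ)^4 * (m : ℂ)^4)

/-- The operator `D g = g′ + (2iam/Δ)·g`, i.e. `e^{−imφ₊}·∂_{r_out}(e^{imφ₊}·g)`. -/
def Dop (M a : ℝ) (m : ℤ) (g : ℝ → ℂ) : ℝ → ℂ := fun r =>
  deriv g r + (2 * Complex.I * (a : ℂ) * (m : ℂ)/((Δk M a r : ℝ) : ℂ)) * g r

/-! Writing `Δ'` for `2r − 2M` and `κ` for `2iam`, so that `Δ'' = 2`, the quotient rule gives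
`D(Δ²) = Δ (2Δ' + κ)`, `D²(Δ²) = 2Δ'² + 4Δ + 3κΔ' + κ²` and `D³(Δ²) = 12Δ' + 6κ + κ D²(Δ²)/Δ`.
One more application of `D`, multiplied by `Δ²`, is a polynomial in `r`, `am` and `i`, which
reduces to `24 A_m` once `i² = −1` is used. -/

namespace Teukolsky

variable (M a : ℝ) (m : ℤ)

def Δc (x : ℝ) : ℂ := (Δk M a x : ℂ)

def Δc' (x : ℝ) : ℂ := 2 * x - 2 * M

def κ : ℂ := 2 * Complex.I * a * m

def Dop₁ (x : ℝ) : ℂ := Δc M a x * (2 * Δc' M x + κ a m)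

def Dop₂ (x : ℝ) : ℂ := 2 * Δc' M x ^ 2 + 4 * Δc M a x + 3 * κ a m * Δc' M x + κ a m ^ 2

def Dop₃ (x : ℝ) : ℂ := 12 * Δc' M x + 6 * κ a m + κ a m * Dop₂ M a m x / Δc M a x

theorem Dop_apply (g : ℝ → ℂ) (x : ℝ) :
    Dop M a m g x = deriv g x + κ a m / Δc M a x * g x := rfl

theorem isOpen_setOf_Δk_ne_zero : IsOpen {x | Δk M a x ≠ 0} :=
  isOpen_ne_fun (by unfold Δk; fun_prop) continuous_const

theorem Δc_ne_zero {x : ℝ} (hx : Δk M a x ≠ 0) : Δc M a x ≠ 0 :=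
  Complex.ofReal_ne_zero.mpr hx

theorem hasDerivAt_Δc (x : ℝ) : HasDerivAt (Δc M a) (Δc' M x) x := by
  have h : HasDerivAt (Δk M a) (2 * x - 2 * M) x :=
    (((hasDerivAt_pow 2 x).sub ((hasDerivAt_id x).const_mul (2 * M))).add_const
      (a ^ 2)).congr_deriv (by simp)
  exact h.ofReal_comp.congr_deriv (by simp [Δc'])

theorem hasDerivAt_Δc' (x : ℝ) : HasDerivAt (Δc' M) 2 x :=
  ((((hasDerivAt_id x).ofReal_comp).const_mul 2).sub_const _).congr_deriv (by simp)

theorem hasDerivAt_Dop₁ (x : ℝ) :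
    HasDerivAt (Dop₁ M a m) (Δc' M x * (2 * Δc' M x + κ a m) + Δc M a x * (2 * 2)) x :=
  (hasDerivAt_Δc M a x).mul (((hasDerivAt_Δc' M x).const_mul 2).add_const (κ a m))

theorem hasDerivAt_Dop₂ (x : ℝ) : HasDerivAt (Dop₂ M a m) (12 * Δc' M x + 6 * κ a m) x := by
  have hΔ' := hasDerivAt_Δc' M x
  refine (((((hΔ'.pow 2).const_mul 2).add ((hasDerivAt_Δc M a x).const_mul 4)).add
    (hΔ'.const_mul (3 * κ a m))).add_const (κ a m ^ 2)).congr_deriv ?_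
  simp only [Δc']
  push_cast
  ring

theorem hasDerivAt_Dop₃ {x : ℝ} (hx : Δk M a x ≠ 0) :
    HasDerivAt (Dop₃ M a m) (12 * 2 + (κ a m * (12 * Δc' M x + 6 * κ a m) * Δc M a x
      - κ a m * Dop₂ M a m x * Δc' M x) / Δc M a x ^ 2) x :=
  (((hasDerivAt_Δc' M x).const_mul 12).add_const (6 * κ a m)).add
    (((hasDerivAt_Dop₂ M a m x).const_mul (κ a m)).div (hasDerivAt_Δc M a x) (Δc_ne_zero M a hx))

variable {M a m}

theorem eqOn_Dop {g f f' : ℝ → ℂ} (hg : Set.EqOn g f {x | Δk M a x ≠ 0})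
    (hf : ∀ x, Δk M a x ≠ 0 → HasDerivAt f (f' x) x) :
    Set.EqOn (Dop M a m g) (fun x => f' x + κ a m / Δc M a x * f x) {x | Δk M a x ≠ 0} := by
  intro x hx
  have hgf : g =ᶠ[nhds x] f :=
    hg.eventuallyEq_of_mem ((isOpen_setOf_Δk_ne_zero M a).mem_nhds hx)
  rw [Dop_apply, hgf.deriv_eq, (hf x hx).deriv, hg hx]

theorem eqOn_Dop_Δc_sq :
    Set.EqOn (Dop M a m fun x => Δc M a x ^ 2) (Dop₁ M a m) {x | Δk M a x ≠ 0} := by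
  refine (eqOn_Dop (f := fun x => Δc M a x ^ 2) (Set.eqOn_refl _ _) fun x _ =>
    (hasDerivAt_Δc M a x).pow 2).trans fun x hx => ?_
  have := Δc_ne_zero M a hx
  simp only [Dop₁]
  field_simp
  ring

theorem eqOn_Dop_of_eqOn_Dop₁ {g : ℝ → ℂ} (hg : Set.EqOn g (Dop₁ M a m) {x | Δk M a x ≠ 0}) :
    Set.EqOn (Dop M a m g) (Dop₂ M a m) {x | Δk M a x ≠ 0} := by
  refine (eqOn_Dop hg fun x _ => hasDerivAt_Dop₁ M a m x).trans fun x hx => ?_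
  have := Δc_ne_zero M a hx
  simp only [Dop₁, Dop₂]
  field_simp
  ring

theorem eqOn_Dop_of_eqOn_Dop₂ {g : ℝ → ℂ} (hg : Set.EqOn g (Dop₂ M a m) {x | Δk M a x ≠ 0}) :
    Set.EqOn (Dop M a m g) (Dop₃ M a m) {x | Δk M a x ≠ 0} :=
  (eqOn_Dop hg fun x _ => hasDerivAt_Dop₂ M a m x).trans fun x _ => by
    simp only [Dop₃]
    ring

theorem Δc_sq_mul_Dop_of_eqOn_Dop₃ {g : ℝ → ℂ} (hg : Set.EqOn g (Dop₃ M a m) {x | Δk M a x ≠ 0})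
    {x : ℝ} (hx : Δk M a x ≠ 0) : Δc M a x ^ 2 * Dop M a m g x = 24 * Am M a m x := by
  rw [eqOn_Dop hg (fun x hx => hasDerivAt_Dop₃ M a m hx) hx]
  have := Δc_ne_zero M a hx
  simp only [Dop₃]
  field_simp
  simp only [Dop₂, Δc', Δc, κ, Am, Δk]
  push_cast
  -- With `u = x − M`, the difference of the two sides is
  -- `(κ² + 4a²m²)(16Δ − 4u² + 4uκ + κ² − 4a²m²)`, and `κ² + 4a²m² = 4a²m²(i² + 1)`.
  linear_combination 4 * (a * m) ^ 2 * (16 * (x ^ 2 - 2 * M * x + a ^ 2) - 4 * (x - M) ^ 2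
    + 8 * Complex.I * a * m * (x - M) + 4 * Complex.I ^ 2 * (a * m) ^ 2 - 4 * (a * m) ^ 2)
    * Complex.I_sq

end Teukolsky

/-- **`Δ²·D⁴(Δ²) = 24·A_m` wherever `Δ ≠ 0`.** -/
theorem stmt_14 (M a : ℝ) (m : ℤ) :
    ∀ r : ℝ, Δk M a r ≠ 0 →
      ((Δk M a r : ℝ) : ℂ)^2 *
        Dop M a m (Dop M a m (Dop M a m (Dop M a m
          (fun x => ((Δk M a x : ℝ) : ℂ)^2)))) r
      = 24 * Am M a m r :=
  fun _ hr => Teukolsky.Δc_sq_mul_Dop_of_eqOn_Dop₃ (Teukolsky.eqOn_Dop_of_eqOn_Dop₂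
    (Teukolsky.eqOn_Dop_of_eqOn_Dop₁ Teukolsky.eqOn_Dop_Δc_sq)) hr
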